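/- Let A be a two-sided skew brace whose multiplicative group (A,∘) is nilpotent. Then the additive group (A,+) is abelian-by-nilpotent and nilpotent-by-abelian; that is, (A,+) has an abelian normal subgroup with nilpotent quotient, and a nilpotent normal subgroup with abelian quotient. -/

import Mathlib

/-- A skew (left) brace: a type with two group structures `(A,+)` and `(A,∘)`
(the latter written multiplicatively) sharing the same identity, satisfying the
left skew brace law `a ∘ (b + c) = a ∘ b − a + a ∘ c`. -/
class SkewBrace (A : Type*) extends AddGroup A, Group A where
  mul_add_eq : ∀ a b c : A, a * (b + c) = a * b - a + a * c

namespace SkewBrace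

variable {A : Type*}

/-- A skew brace is two-sided if `(a + b) ∘ c = a ∘ c − c + b ∘ c`. -/
def IsTwoSided (A : Type*) [SkewBrace A] : Prop :=
  ∀ a b c : A, (a + b) * c = a * c - c + b * c

/-- `a * b = −a + a∘b − b`. -/
def bstar [SkewBrace A] (a b : A) : A := -a + a * b - b

/-- the star operation of the opposite skew brace: `a *ₒₚ b = −b + a∘b − a`. -/
def bstarOp [SkewBrace A] (a b : A) : A := -b + a * b - a

/-- `X * Y`: the additive subgroup generated by all `x * y`, `x ∈ X`, `y ∈ Y`. -/
def starSet [SkewBrace A] (X Y : Set A) : AddSubgroup A :=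
  AddSubgroup.closure {z | ∃ x ∈ X, ∃ y ∈ Y, z = bstar x y}

/-- `A² = A * A`. -/
def sq (A : Type*) [SkewBrace A] : AddSubgroup A := starSet Set.univ Set.univ

/-- `A²ₒₚ`, the additive subgroup generated by all `a *ₒₚ b`. -/
def sqOp (A : Type*) [SkewBrace A] : AddSubgroup A :=
  AddSubgroup.closure {z | ∃ a b : A, z = bstarOp a b}

/-- A skew brace is weakly trivial if `A² ∩ A²ₒₚ = {0}`. -/
def IsWeaklyTrivial (A : Type*) [SkewBrace A] : Prop := sq A ⊓ sqOp A = ⊥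

/-- An ideal of a skew brace: an additive subgroup, normal in `(A,+)` and in
`(A,∘)`, and invariant under all `λ_a : b ↦ −a + a∘b`. -/
structure IsIdeal [SkewBrace A] (I : AddSubgroup A) : Prop where
  add_conj : ∀ a : A, ∀ x ∈ I, a + x - a ∈ I
  mul_conj : ∀ a : A, ∀ x ∈ I, a * x * a⁻¹ ∈ I
  lambda_mem : ∀ a : A, ∀ x ∈ I, -a + a * x ∈ I

/-- The left series `A¹ = A`, `Aⁿ⁺¹ = A * Aⁿ`; `leftSeries A n` is `Aⁿ⁺¹`. -/
def leftSeries (A : Type*) [SkewBrace A] : ℕ → AddSubgroup A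
  | 0 => ⊤
  | n + 1 => starSet Set.univ (leftSeries A n : Set A)

/-- The right series `A⁽¹⁾ = A`, `A⁽ⁿ⁺¹⁾ = A⁽ⁿ⁾ * A`; `rightSeries A n` is `A⁽ⁿ⁺¹⁾`. -/
def rightSeries (A : Type*) [SkewBrace A] : ℕ → AddSubgroup A
  | 0 => ⊤
  | n + 1 => starSet (rightSeries A n : Set A) Set.univ

/-- A skew brace is left nilpotent if its left series reaches `{0}`. -/
def IsLeftNilpotent (A : Type*) [SkewBrace A] : Prop := ∃ n, leftSeries A n = ⊥

/-- A skew brace is right nilpotent if its right series reaches `{0}`. -/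
def IsRightNilpotent (A : Type*) [SkewBrace A] : Prop := ∃ n, rightSeries A n = ⊥

/-- The series `A⁽¹⁾ = A`, `A^[n+1]` generated by the union of `A^[i] * A^[n+1-i]`;
`strongSeries A n` is `A^[n+1]`. -/
def strongSeries (A : Type*) [SkewBrace A] : ℕ → AddSubgroup A
  | 0 => ⊤
  | n + 1 => ⨆ i : Fin (n + 1),
      starSet (strongSeries A i.val : Set A) (strongSeries A (n - i.val) : Set A)
  decreasing_by
  · exact i.isLt
  · have := i.isLt; omega

/-- A skew brace is strongly nilpotent if the series `A^[n]` reaches `{0}`. -/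
def IsStronglyNilpotent (A : Type*) [SkewBrace A] : Prop := ∃ n, strongSeries A n = ⊥

/-- The derived series of a skew brace: `A₁ = A`, `Aₙ₊₁ = Aₙ * Aₙ`;
`derivedSeriesBrace A n` is `Aₙ₊₁`. -/
def derivedSeriesBrace (A : Type*) [SkewBrace A] : ℕ → AddSubgroup A
  | 0 => ⊤
  | n + 1 => starSet (derivedSeriesBrace A n : Set A) (derivedSeriesBrace A n : Set A)

/-- A skew brace is soluble if its derived series reaches `{0}`. -/
def IsSolubleBrace (A : Type*) [SkewBrace A] : Prop := ∃ n, derivedSeriesBrace A n = ⊥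

end SkewBrace

namespace SkewBrace

/-- The quotient of `(A,+)` by the normal subgroup `N` is a nilpotent group. -/
def QuotIsNilpotent (A : Type*) [SkewBrace A] (N : AddSubgroup A) (hN : N.Normal) : Prop :=
  letI := hN
  Group.IsNilpotent (Multiplicative (A ⧸ N))

/-- The quotient of `(A,+)` by the normal subgroup `N` is an abelian group. -/
def QuotIsAbelian (A : Type*) [SkewBrace A] (N : AddSubgroup A) (hN : N.Normal) : Prop :=
  letI := hN
  ∀ x y : A ⧸ N, x + y = y + x

end SkewBrace
set_option linter.unusedSectionVars false

namespace TwoSidedAux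

open SkewBrace

variable {A : Type*} [SkewBrace A]

/-! ### Basic consequences of the skew brace axioms -/

theorem mul_zero_br (a : A) : a * (0 : A) = a := by
  have h := SkewBrace.mul_add_eq a 0 0
  rw [add_zero] at h
  have h2 : a * 0 + (0 : A) = a * 0 + (-a + a * 0) := by
    rw [add_zero]
    conv_lhs => rw [h]
    rw [sub_eq_add_neg, add_assoc]
  have h3 : (0 : A) = -a + a * 0 := add_left_cancel h2
  exact (neg_add_eq_zero.mp h3.symm).symm

theorem one_eq_zero : (1 : A) = 0 := by
  have := mul_zero_br (1 : A)
  rw [one_mul] at this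
  exact this.symm

theorem zero_mul_br (a : A) : (0 : A) * a = a := by
  calc (0 : A) * a = 1 * a := by rw [one_eq_zero]
  _ = a := one_mul a

/-! ### The lambda maps -/

/-- `lam a b = -a + a∘b`. -/
def lam (a b : A) : A := -a + a * b

theorem mul_eq_add_lam (a b : A) : a * b = a + lam a b := by
  rw [lam, add_neg_cancel_left]

theorem lam_add (a b c : A) : lam a (b + c) = lam a b + lam a c := by
  simp only [lam, SkewBrace.mul_add_eq a b c, sub_eq_add_neg, add_assoc]

theorem lam_zero (a : A) : lam a (0 : A) = 0 := by
  rw [lam, mul_zero_br, neg_add_cancel]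

theorem lam_neg (a b : A) : lam a (-b) = -lam a b := by
  have hh : lam a b + lam a (-b) = 0 := by
    rw [← lam_add, add_neg_cancel, lam_zero]
  exact (neg_eq_of_add_eq_zero_right hh).symm

theorem lam_sub (a b c : A) : lam a (b - c) = lam a b - lam a c := by
  rw [sub_eq_add_neg, lam_add, lam_neg, sub_eq_add_neg]

theorem mul_neg_br (a d : A) : a * (-d) = a - a * d + a := by
  have h := SkewBrace.mul_add_eq a (-d) d
  rw [neg_add_cancel, mul_zero_br] at h
  -- h : a = a * -d - a + a * d
  have h3 := congrArg (fun z => z + -(a * d) + a) h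
  simp only [sub_eq_add_neg, add_assoc, add_neg_cancel_left, neg_add_cancel_left,
    add_neg_cancel, neg_add_cancel, add_zero, zero_add] at h3
  rw [sub_eq_add_neg, add_assoc]
  exact h3.symm

/-! ### The sigma maps (additive thanks to two-sidedness) -/

/-- `sig d x = -d + x∘d`. -/
def sig (d x : A) : A := -d + x * d

section TwoSided

variable (h : IsTwoSided A)
include h

theorem neg_mul_br (d e : A) : (-d) * e = e - d * e + e := by
  have h1 := h d (-d) e
  rw [add_neg_cancel, zero_mul_br] at h1
  -- h1 : e = d * e - e + -d * e
  have h2 : -(d * e - e) + e = (-d) * e := by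
    have h3 := congrArg (fun z => -(d * e - e) + z) h1
    simp only [neg_add_cancel_left] at h3
    exact h3
  rw [← h2, neg_sub]

theorem sig_add (d x y : A) : sig d (x + y) = sig d x + sig d y := by
  simp only [sig, h x y d, sub_eq_add_neg, add_assoc]

theorem sig_zero (d : A) : sig d (0 : A) = 0 := by
  rw [sig, zero_mul_br, neg_add_cancel]

theorem sig_neg (d x : A) : sig d (-x) = -sig d x := by
  have hh : sig d x + sig d (-x) = 0 := by
    rw [← sig_add h, add_neg_cancel, sig_zero h]
  exact (neg_eq_of_add_eq_zero_right hh).symm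

theorem sig_sub (d x y : A) : sig d (x - y) = sig d x - sig d y := by
  rw [sub_eq_add_neg, sig_add h, sig_neg h, sub_eq_add_neg]

theorem sig_sig (d e x : A) : sig e (sig d x) = sig (d * e) x := by
  simp only [sig]
  rw [h (-d) (x * d) e, neg_mul_br h d e, mul_assoc]
  simp only [sub_eq_add_neg, add_assoc, neg_add_cancel_left, add_neg_cancel_left,
    neg_add_cancel, add_neg_cancel, add_zero, zero_add, neg_add_rev, neg_neg]

theorem sig_sig_inv (d b : A) : sig d (sig d⁻¹ b) = b := by
  rw [sig_sig h, inv_mul_cancel, sig, mul_one, one_eq_zero, neg_zero, zero_add]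

theorem lam_sig (a d x : A) : lam a (sig d x) = sig d (lam a x) := by
  have hl : lam a (sig d x) = -(a * d) + a * (x * d) := by
    rw [lam, sig, SkewBrace.mul_add_eq a (-d) (x * d), mul_neg_br a d]
    simp only [sub_eq_add_neg, add_assoc, neg_add_cancel_left, add_neg_cancel_left,
      neg_add_rev, neg_neg, neg_add_cancel, add_neg_cancel, add_zero, zero_add]
  have hr : sig d (lam a x) = -(a * d) + a * (x * d) := by
    rw [sig, lam, h (-a) (a * x) d, neg_mul_br h a d, mul_assoc]
    simp only [sub_eq_add_neg, add_assoc, neg_add_cancel_left, add_neg_cancel_left,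
      neg_add_rev, neg_neg, neg_add_cancel, add_neg_cancel, add_zero, zero_add]
  rw [hl, hr]

end TwoSided

/-! ### bstar and bstarOp rewrites -/

theorem bstar_eq (a b : A) : bstar a b = lam a b - b := by
  simp only [bstar, lam, sub_eq_add_neg, add_assoc]

theorem bstar_zero_left (b : A) : bstar (0 : A) b = 0 := by
  rw [bstar, zero_mul_br, neg_zero, zero_add, sub_self]

theorem bstarOp_eq (c d : A) : bstarOp c d = sig d c - c := by
  simp only [bstarOp, sig, sub_eq_add_neg, add_assoc]

section TwoSided2

variable (h : IsTwoSided A)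
include h

theorem sig_bstar (d a b : A) : sig d (bstar a b) = bstar a (sig d b) := by
  rw [bstar_eq, bstar_eq, sig_sub h, lam_sig h]

theorem lam_add_arg (x y c : A) : lam (x + y) c = -y + lam x c - c + y + lam y c := by
  simp only [lam]
  rw [h x y c]
  simp only [sub_eq_add_neg, neg_add_rev, add_assoc, neg_add_cancel_left,
    add_neg_cancel_left]

theorem bstar_add_arg (x y b : A) :
    bstar (x + y) b = -y + bstar x b + y + bstar y b := by
  simp only [bstar_eq]
  rw [lam_add_arg h]
  simp only [sub_eq_add_neg, add_assoc]

/-- Conjugation formula for `bstar`. -/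
theorem conj_bstar (y x b : A) :
    -y + bstar x b + y = bstar (x + y) b - bstar y b := by
  rw [bstar_add_arg h]
  simp only [sub_eq_add_neg, add_assoc, add_neg_cancel, add_zero]

/-- Conjugation formula for `bstar`, other direction. -/
theorem conj_bstar' (g x b : A) :
    g + bstar x b + -g = bstar (x + -g) b - bstar (-g) b := by
  have := conj_bstar h (-g) x b
  rwa [neg_neg] at this

theorem bstarOp_add_arg (x y d : A) :
    bstarOp (x + y) d = bstarOp x d + (x + bstarOp y d + -x) := by
  simp only [bstarOp_eq]
  rw [sig_add h]
  simp only [sub_eq_add_neg, add_assoc, neg_add_rev, neg_neg, neg_add_cancel_left,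
    add_neg_cancel_left]

/-- Conjugation formula for `bstarOp`. -/
theorem conj_bstarOp (g y d : A) :
    g + bstarOp y d + -g = -bstarOp g d + bstarOp (g + y) d := by
  rw [bstarOp_add_arg h, ← add_assoc, neg_add_cancel, zero_add]

/-! ### The key commutation identity -/

theorem bstarOp_comm_bstar (c d a b : A) :
    bstarOp c d + bstar a b = bstar a b + bstarOp c d := by
  set b' := sig d⁻¹ b with hb'
  have hb : sig d b' = b := sig_sig_inv h d b
  -- step A : conjugating `bstar a b` by `-c`
  have hA : -c + bstar a b + c = bstar (a + c) b - bstar c b := conj_bstar h c a b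
  -- step B : pull `sig d` out
  have hB1 : bstar (a + c) b = sig d (bstar (a + c) b') := by
    rw [sig_bstar h, hb]
  have hB2 : bstar c b = sig d (bstar c b') := by
    rw [sig_bstar h, hb]
  -- step C : conjugating by `c` collapses
  have hC : c + (bstar (a + c) b' - bstar c b') + -c = bstar a b' := by
    have e1 : c + bstar (a + c) b' + -c = bstar a b' - bstar (-c) b' := by
      have t1 := conj_bstar' h c (a + c) b'
      have t2 : a + c + -c = a := by rw [add_assoc, add_neg_cancel, add_zero]
      rwa [t2] at t1
    have e2 : c + bstar c b' + -c = -bstar (-c) b' := by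
      have t1 := conj_bstar' h c c b'
      rwa [add_neg_cancel, bstar_zero_left, zero_sub] at t1
    calc c + (bstar (a + c) b' - bstar c b') + -c
        = (c + bstar (a + c) b' + -c) + (c + (-bstar c b') + -c) := by
          simp only [sub_eq_add_neg, add_assoc, neg_add_cancel_left]
      _ = (c + bstar (a + c) b' + -c) + -(c + bstar c b' + -c) := by
          simp only [neg_add_rev, neg_neg, add_assoc]
      _ = (bstar a b' - bstar (-c) b') + -(-bstar (-c) b') := by rw [e1, e2]
      _ = bstar a b' := by rw [neg_neg, sub_eq_add_neg, add_assoc, neg_add_cancel, add_zero]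
  -- assemble : bstarOp c d + bstar a b + -(bstarOp c d) = bstar a b
  have main : bstarOp c d + bstar a b + -(bstarOp c d) = bstar a b := by
    have expand : bstarOp c d + bstar a b + -(bstarOp c d)
        = sig d c + (-c + bstar a b + c) + -(sig d c) := by
      simp only [bstarOp_eq, sub_eq_add_neg, neg_add_rev, neg_neg, add_assoc]
    rw [expand, hA, hB1, hB2, ← sig_sub h]
    have : sig d c + sig d (bstar (a + c) b' - bstar c b') + -(sig d c)
        = sig d (c + (bstar (a + c) b' - bstar c b') + -c) := by
      rw [sig_add h, sig_add h, sig_neg h]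
    rw [this, hC, sig_bstar h, hb]
  calc bstarOp c d + bstar a b
      = bstarOp c d + bstar a b + -(bstarOp c d) + bstarOp c d := by
        rw [add_assoc, neg_add_cancel, add_zero]
    _ = bstar a b + bstarOp c d := by rw [main]

end TwoSided2

end TwoSidedAux
set_option linter.unusedSectionVars false

namespace TwoSidedAux

open SkewBrace AddSubgroup

variable {A : Type*} [SkewBrace A]

theorem bstar_mem_sq (a b : A) : bstar a b ∈ sq A :=
  AddSubgroup.subset_closure ⟨a, trivial, b, trivial, rfl⟩

theorem bstarOp_mem_sqOp (a b : A) : bstarOp a b ∈ sqOp A :=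
  AddSubgroup.subset_closure ⟨a, b, rfl⟩

section TwoSided3

variable (h : IsTwoSided A)
include h

theorem sq_normal : (sq A).Normal := by
  constructor
  intro n hn g
  refine AddSubgroup.closure_induction ?_ ?_ ?_ ?_ hn
  · rintro z ⟨x, -, y, -, rfl⟩
    rw [conj_bstar' h g x y]
    exact sub_mem (bstar_mem_sq _ _) (bstar_mem_sq _ _)
  · simpa using (sq A).zero_mem
  · intro x y _ _ hx hy
    have : g + (x + y) + -g = (g + x + -g) + (g + y + -g) := by
      simp only [add_assoc, neg_add_cancel_left]
    rw [this]; exact add_mem hx hy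
  · intro x _ hx
    have : g + (-x) + -g = -(g + x + -g) := by
      simp only [neg_add_rev, neg_neg, add_assoc]
    rw [this]; exact neg_mem hx

theorem sqOp_normal : (sqOp A).Normal := by
  constructor
  intro n hn g
  refine AddSubgroup.closure_induction ?_ ?_ ?_ ?_ hn
  · rintro z ⟨x, y, rfl⟩
    rw [conj_bstarOp h g x y]
    exact add_mem (neg_mem (bstarOp_mem_sqOp _ _)) (bstarOp_mem_sqOp _ _)
  · simpa using (sqOp A).zero_mem
  · intro x y _ _ hx hy
    have : g + (x + y) + -g = (g + x + -g) + (g + y + -g) := by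
      simp only [add_assoc, neg_add_cancel_left]
    rw [this]; exact add_mem hx hy
  · intro x _ hx
    have : g + (-x) + -g = -(g + x + -g) := by
      simp only [neg_add_rev, neg_neg, add_assoc]
    rw [this]; exact neg_mem hx

/-- Every element of `A²` commutes additively with every element of `A²ₒₚ`. -/
theorem sq_comm_sqOp : ∀ x ∈ sq A, ∀ y ∈ sqOp A, x + y = y + x := by
  have h1 : sq A ≤ AddSubgroup.centralizer {z | ∃ a b : A, z = bstarOp a b} := by
    show AddSubgroup.closure {z | ∃ x ∈ Set.univ, ∃ y ∈ Set.univ, z = bstar x y} ≤ _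
    rw [AddSubgroup.closure_le]
    rintro z ⟨x, -, y, -, rfl⟩
    rw [SetLike.mem_coe, AddSubgroup.mem_centralizer_iff]
    rintro w ⟨c, d, rfl⟩
    exact bstarOp_comm_bstar h c d x y
  intro x hx y hy
  have h2 : sqOp A ≤ AddSubgroup.centralizer {x} := by
    show AddSubgroup.closure {z | ∃ a b : A, z = bstarOp a b} ≤ _
    rw [AddSubgroup.closure_le]
    rintro z ⟨a, b, rfl⟩
    rw [SetLike.mem_coe, AddSubgroup.mem_centralizer_iff]
    rintro w rfl
    exact ((AddSubgroup.mem_centralizer_iff.mp (h1 hx)) (bstarOp a b) ⟨a, b, rfl⟩).symm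
  exact (AddSubgroup.mem_centralizer_iff.mp (h2 hy)) x rfl

/-- `a∘b` and `a + b` agree modulo `A²`. -/
theorem mul_sub_add_mem_sq (a b : A) : -(a * b) + (a + b) ∈ sq A := by
  have e : -(a * b) + (a + b) = -b + -(bstar a b) + b := by
    simp only [bstar, sub_eq_add_neg, neg_add_rev, neg_neg, add_assoc,
      neg_add_cancel_left, add_neg_cancel_left, neg_add_cancel, add_neg_cancel,
      add_zero, zero_add]
  rw [e]
  have := (sq_normal h).conj_mem (-(bstar a b)) (neg_mem (bstar_mem_sq a b)) (-b)
  rwa [neg_neg] at this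

/-- `a∘b` and `b + a` agree modulo `A²ₒₚ`. -/
theorem mul_sub_add_mem_sqOp (a b : A) : a * b + (-a + -b) ∈ sqOp A := by
  have e : a * b + (-a + -b) = b + bstarOp a b + -b := by
    simp only [bstarOp, sub_eq_add_neg, neg_add_rev, neg_neg, add_assoc,
      neg_add_cancel_left, add_neg_cancel_left, neg_add_cancel, add_neg_cancel,
      add_zero, zero_add]
  rw [e]
  exact (sqOp_normal h).conj_mem _ (bstarOp_mem_sqOp a b) b

/-- Additive commutators lie in `A² ⊔ A²ₒₚ`. -/
theorem commutator_mem_sup (a b : A) : -a + -b + a + b ∈ sq A ⊔ sqOp A := by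
  have e : -a + -b + a + b
      = (-a + bstarOp a b + -(-a)) + (-(a * b) + (a + -(bstar a b) + -a) + -(-(a * b))) := by
    simp only [bstar, bstarOp, sub_eq_add_neg, neg_add_rev, neg_neg, add_assoc,
      neg_add_cancel_left, add_neg_cancel_left, neg_add_cancel, add_neg_cancel,
      add_zero, zero_add]
  rw [e]
  have m1 : -a + bstarOp a b + -(-a) ∈ sq A ⊔ sqOp A := by
    have hnorm : (sq A ⊔ sqOp A).Normal := by
      have h1 := sq_normal h
      have h2 := sqOp_normal h
      exact AddSubgroup.sup_normal _ _
    exact hnorm.conj_mem _ (SetLike.le_def.mp le_sup_right (bstarOp_mem_sqOp a b)) (-a)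
  have m2 : -(a * b) + (a + -(bstar a b) + -a) + -(-(a * b)) ∈ sq A ⊔ sqOp A := by
    have hnorm : (sq A ⊔ sqOp A).Normal := by
      have h1 := sq_normal h
      have h2 := sqOp_normal h
      exact AddSubgroup.sup_normal _ _
    refine hnorm.conj_mem _ ?_ (-(a * b))
    refine hnorm.conj_mem _ ?_ a
    exact SetLike.le_def.mp le_sup_left (neg_mem (bstar_mem_sq a b))
  exact add_mem m1 m2

end TwoSided3

end TwoSidedAux

open TwoSidedAux in
open SkewBrace in
/-- If `A` is a two-sided skew brace with nilpotent multiplicative group, then its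
additive group is abelian-by-nilpotent and nilpotent-by-abelian. -/
theorem additive_abelian_by_nilpotent_and_nilpotent_by_abelian (A : Type*) [SkewBrace A]
    (h : IsTwoSided A) (hnil : Group.IsNilpotent A) :
    (∃ (N : AddSubgroup A) (hN : N.Normal),
      (∀ x ∈ N, ∀ y ∈ N, x + y = y + x) ∧ QuotIsNilpotent A N hN) ∧
    (∃ (N : AddSubgroup A) (hN : N.Normal),
      Group.IsNilpotent (Multiplicative ↥N) ∧ QuotIsAbelian A N hN) := by
  haveI := hnil
  haveI hsqn : (sq A).Normal := sq_normal h
  haveI hsqopn : (sqOp A).Normal := sqOp_normal h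
  haveI hIn : (sq A ⊓ sqOp A).Normal := AddSubgroup.normal_inf_normal _ _
  haveI hJn : (sq A ⊔ sqOp A).Normal := AddSubgroup.sup_normal _ _
  -- (A ⧸ sq A, +) is nilpotent, being the image of (A, ∘)
  haveI nil1 : Group.IsNilpotent (Multiplicative (A ⧸ sq A)) := by
    refine nilpotent_of_surjective
      (MonoidHom.mk' (fun a : A => Multiplicative.ofAdd ((a : A ⧸ sq A))) ?_) ?_
    · intro a b
      have : ((a * b : A) : A ⧸ sq A) = ((a + b : A) : A ⧸ sq A) :=
        (QuotientAddGroup.eq).mpr (mul_sub_add_mem_sq h a b)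
      simp only [this]
      rfl
    · intro y
      exact ⟨y.toAdd.out, by
        show Multiplicative.ofAdd ((y.toAdd.out : A) : A ⧸ sq A) = y
        simp [QuotientAddGroup.out_eq']⟩
  -- (A ⧸ sqOp A, +) is nilpotent, being the image of (A, ∘) via `a ↦ -a`
  haveI nil2 : Group.IsNilpotent (Multiplicative (A ⧸ sqOp A)) := by
    refine nilpotent_of_surjective
      (MonoidHom.mk' (fun a : A => Multiplicative.ofAdd ((-a : A) : A ⧸ sqOp A)) ?_) ?_
    · intro a b
      have : ((-(a * b) : A) : A ⧸ sqOp A) = ((-a + -b : A) : A ⧸ sqOp A) := by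
        refine (QuotientAddGroup.eq).mpr ?_
        rw [neg_neg]
        exact mul_sub_add_mem_sqOp h a b
      simp only [this]
      rfl
    · intro y
      exact ⟨-y.toAdd.out, by
        show Multiplicative.ofAdd ((-(-y.toAdd.out) : A) : A ⧸ sqOp A) = y
        simp [QuotientAddGroup.out_eq']⟩
  -- (A ⧸ (sq A ⊓ sqOp A), +) is nilpotent : it embeds in the product
  haveI nilI : Group.IsNilpotent (Multiplicative (A ⧸ (sq A ⊓ sqOp A))) := by
    set q1 : A ⧸ (sq A ⊓ sqOp A) →+ A ⧸ sq A :=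
      QuotientAddGroup.map _ _ (AddMonoidHom.id A)
        (by intro x hx; simpa using hx.1) with hq1
    set q2 : A ⧸ (sq A ⊓ sqOp A) →+ A ⧸ sqOp A :=
      QuotientAddGroup.map _ _ (AddMonoidHom.id A)
        (by intro x hx; simpa using hx.2) with hq2
    set F : Multiplicative (A ⧸ (sq A ⊓ sqOp A)) →*
        Multiplicative (A ⧸ sq A) × Multiplicative (A ⧸ sqOp A) :=
      MonoidHom.prod (AddMonoidHom.toMultiplicative q1) (AddMonoidHom.toMultiplicative q2)
      with hF
    refine isNilpotent_of_ker_le_center F ?_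
    intro x hx
    have hx1 : F x = 1 := hx
    have : x = 1 := by
      induction' hxq : x.toAdd using QuotientAddGroup.induction_on with a
      have c1 : q1 x.toAdd = 0 := congrArg (fun p => (Prod.fst p).toAdd) hx1
      have c2 : q2 x.toAdd = 0 := congrArg (fun p => (Prod.snd p).toAdd) hx1
      rw [hxq] at c1 c2
      have ha1 : a ∈ sq A := (QuotientAddGroup.eq_zero_iff a).mp c1
      have ha2 : a ∈ sqOp A := (QuotientAddGroup.eq_zero_iff a).mp c2
      have : (a : A ⧸ (sq A ⊓ sqOp A)) = 0 :=
        (QuotientAddGroup.eq_zero_iff a).mpr ⟨ha1, ha2⟩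
      have : x.toAdd = 0 := by rw [hxq, this]
      exact Multiplicative.toAdd.injective this
    rw [this]; exact Subgroup.one_mem _
  constructor
  · -- abelian-by-nilpotent : take N = sq ⊓ sqOp
    refine ⟨sq A ⊓ sqOp A, hIn, ?_, ?_⟩
    · intro x hx y hy
      exact sq_comm_sqOp h x hx.1 y hy.2
    · exact nilI
  · -- nilpotent-by-abelian : take N = sq ⊔ sqOp
    refine ⟨sq A ⊔ sqOp A, hJn, ?_, ?_⟩
    · -- (sq ⊔ sqOp, +) is nilpotent
      set f0 : ↥(sq A ⊔ sqOp A) →+ A ⧸ (sq A ⊓ sqOp A) :=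
        (QuotientAddGroup.mk' (sq A ⊓ sqOp A)).comp (sq A ⊔ sqOp A).subtype with hf0
      refine isNilpotent_of_ker_le_center (AddMonoidHom.toMultiplicative f0) ?_
      intro x hx
      have hmem : (x.toAdd : A) ∈ sq A ⊓ sqOp A := by
        have : f0 x.toAdd = 0 := hx
        exact (QuotientAddGroup.eq_zero_iff _).mp this
      rw [Subgroup.mem_center_iff]
      intro g
      have hcomm : ∀ w ∈ sq A ⊔ sqOp A, w + (x.toAdd : A) = (x.toAdd : A) + w := by
        intro w hw
        have hle : sq A ⊔ sqOp A ≤ AddSubgroup.centralizer {(x.toAdd : A)} := by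
          refine sup_le ?_ ?_
          · intro v hv
            rw [AddSubgroup.mem_centralizer_iff]
            rintro m rfl
            exact (sq_comm_sqOp h v hv _ hmem.2).symm
          · intro v hv
            rw [AddSubgroup.mem_centralizer_iff]
            rintro m rfl
            exact sq_comm_sqOp h _ hmem.1 v hv
        exact (AddSubgroup.mem_centralizer_iff.mp (hle hw) _ rfl).symm
      have : g.toAdd + x.toAdd = x.toAdd + g.toAdd := by
        ext
        exact hcomm g.toAdd.val g.toAdd.2
      exact congrArg Multiplicative.ofAdd this
    · -- the quotient is abelian
      show QuotIsAbelian A (sq A ⊔ sqOp A) hJn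
      intro x y
      induction' x using QuotientAddGroup.induction_on with a
      induction' y using QuotientAddGroup.induction_on with b
      show ((a + b : A) : A ⧸ (sq A ⊔ sqOp A)) = ((b + a : A) : _)
      refine (QuotientAddGroup.eq).mpr ?_
      have e : -(a + b) + (b + a) = -b + -a + b + a := by
        simp only [neg_add_rev, add_assoc]
      rw [e]
      exact commutator_mem_sup h b a
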